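/- In 𝔽₂₃, define n_j = 2^(3^j) for j ∈ ℕ, Z = {0} ∪ ⋃_{j odd} ( (n_j^{−3}, n_j^{−1}] ∪ [−n_j^{−1}, −n_j^{−3}) ) ⊆ ℝ, 𝒞 = {x ∈ ℝ⁵ : x₂ ≥ 0, x₄ ≥ 0, x₅² ≤ 2x₂³x₄}, E = {x ∈ ℝ⁵ : x₂ ≥ 0, x₄ ≥ 0, and ∃ t ∈ Z, (x₅ − t)² ≤ 2x₂³x₄}, and E₂ = {x ∈ ℝ⁵ : x₂ ≥ 0 and x₄ ≥ 0}. Let δ_r(x) = (r x₁, r x₂, r² x₃, r³ x₄, r³ x₅) be the intrinsic dilations, and set λ_ℓ = n_{2ℓ+1}^{2/3} and μ_ℓ = n_{2ℓ}^{2/3} for ℓ ≥ 1. Then for every R > 0, the Lebesgue measure of the symmetric difference (δ_{λ_ℓ}(E) Δ E₂) intersected with the Euclidean ball B(0, R) tends to 0 as ℓ → ∞, and the Lebesgue measure of (δ_{μ_ℓ}(E) Δ 𝒞) ∩ B(0, R) tends to 0 as ℓ → ∞; moreover 𝒞 ≠ E₂. Hence E admits two distinct blow-ups at the origin along the two sequences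 of dilations. -/

import Mathlib

/-!
After the dilation `δ_r` with `r³ = n_k²`, the set `E` becomes the union of the translates of
`𝒞` by `s e₅` with `s ∈ n_k² Z`. For odd `k` these `s` fill `n_k⁻¹ < |s| ≤ n_k`, so inside a
fixed ball `δ_r E` misses from `E₂` only points with `0 < |x₅| ≤ n_k⁻¹`. For even `k` the set
`Z` has a gap at scale `n_k⁻¹`: every `s` has `|s| ≤ n_k⁻¹` or `|s| > n_k`, so inside a ball of
radius `R` the set `δ_r E \ 𝒞` lies in the shell `0 < x₅² - 2x₂³x₄ ≤ 2R/n_k`. Both exceptional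
sets shrink to the empty set, so their measures tend to `0` by continuity from above.
-/

open MeasureTheory Set Filter Topology

/-- `n_j = 2^(3^j)`. -/
def nseq (j : ℕ) : ℕ := 2 ^ (3 ^ j)

/-- The set `Z = {0} ∪ ⋃_{j odd} ((n_j⁻³, n_j⁻¹] ∪ [−n_j⁻¹, −n_j⁻³)) ⊆ ℝ`. -/
noncomputable def Zset : Set ℝ :=
  {0} ∪ ⋃ (j : ℕ) (_ : Odd j),
    (Ioc (((nseq j : ℝ)) ^ 3)⁻¹ ((nseq j : ℝ))⁻¹ ∪
     Ico (-((nseq j : ℝ))⁻¹) (-((((nseq j : ℝ)) ^ 3)⁻¹)))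

/-- The cone `𝒞 = {x : x₂ ≥ 0, x₄ ≥ 0, x₅² ≤ 2x₂³x₄}` (coordinates indexed from `0`). -/
noncomputable def Cone : Set (Fin 5 → ℝ) :=
  {x | 0 ≤ x 1 ∧ 0 ≤ x 3 ∧ (x 4) ^ 2 ≤ 2 * (x 1) ^ 3 * x 3}

/-- `E = ⋃_{t ∈ Z} (𝒞 + t e₅)`. -/
noncomputable def Eset : Set (Fin 5 → ℝ) :=
  {x | 0 ≤ x 1 ∧ 0 ≤ x 3 ∧ ∃ t ∈ Zset, (x 4 - t) ^ 2 ≤ 2 * (x 1) ^ 3 * x 3}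

/-- The half-space `E₂ = {x : x₂ ≥ 0, x₄ ≥ 0}`. -/
noncomputable def E2 : Set (Fin 5 → ℝ) := {x | 0 ≤ x 1 ∧ 0 ≤ x 3}

/-- The intrinsic dilations of `𝔽₂₃` in exponential coordinates of the second kind. -/
noncomputable def dil (r : ℝ) (x : Fin 5 → ℝ) : Fin 5 → ℝ :=
  ![r * x 0, r * x 1, r ^ 2 * x 2, r ^ 3 * x 3, r ^ 3 * x 4]

lemma tendsto_measure_preimage_Ioc_zero {α : Type*} [MeasurableSpace α] (μ : Measure α)
    [IsFiniteMeasure μ] {g : α → ℝ} (hg : Measurable g) :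
    Tendsto (fun r => μ (g ⁻¹' Ioc 0 r)) (𝓝 0) (𝓝 0) := by
  rw [← nhdsLE_sup_nhdsGT]
  refine Tendsto.sup ?_ ?_
  · refine tendsto_const_nhds.congr' ?_
    filter_upwards [self_mem_nhdsWithin] with r (hr : r ≤ 0)
    rw [Ioc_eq_empty hr.not_gt, preimage_empty, measure_empty]
  · have hInter : ⋂ r > (0 : ℝ), g ⁻¹' Ioc 0 r = ∅ := by
      refine eq_empty_of_forall_notMem fun x hx => ?_
      simp only [mem_iInter, mem_preimage, mem_Ioc] at hx
      have hpos := (hx 1 one_pos).1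
      linarith [(hx (g x / 2) (half_pos hpos)).2]
    have := tendsto_measure_biInter_gt (μ := μ) (s := fun r => g ⁻¹' Ioc 0 r) (a := 0)
      (fun r _ => (hg measurableSet_Ioc).nullMeasurableSet)
      (fun i j _ hij => preimage_mono (Ioc_subset_Ioc_right hij)) ⟨1, one_pos, measure_ne_top _ _⟩
    rwa [hInter, measure_empty] at this

lemma tendsto_measure_inter_of_subset_preimage_Ioc {α ι : Type*} [MeasurableSpace α]
    {μ : Measure α} {B : Set α} (hB : MeasurableSet B) (hμB : μ B ≠ ⊤) {g : α → ℝ}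
    (hg : Measurable g) {l : Filter ι} {ε : ι → ℝ} (hε : Tendsto ε l (𝓝 0)) {D : ι → Set α}
    (hD : ∀ᶠ i in l, D i ∩ B ⊆ g ⁻¹' Ioc 0 (ε i)) :
    Tendsto (fun i => μ (D i ∩ B)) l (𝓝 0) := by
  have : IsFiniteMeasure (μ.restrict B) := isFiniteMeasure_restrict.mpr hμB
  refine tendsto_of_tendsto_of_tendsto_of_le_of_le' tendsto_const_nhds
    ((tendsto_measure_preimage_Ioc_zero (μ.restrict B) hg).comp hε)
    (Eventually.of_forall fun _ => zero_le) ?_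
  filter_upwards [hD] with i hi
  calc μ (D i ∩ B) = μ.restrict B (D i ∩ B) := by
        rw [Measure.restrict_apply' hB, inter_assoc, inter_self]
    _ ≤ μ.restrict B (g ⁻¹' Ioc 0 (ε i)) := measure_mono hi

lemma abs_le_of_mem_ball {ι : Type*} [Fintype ι] {y : ι → ℝ} {R : ℝ}
    (hy : y ∈ Metric.ball (0 : ι → ℝ) R) (i : ι) : |y i| ≤ R :=
  (norm_le_pi_norm y i).trans (mem_ball_zero_iff.1 hy).le

lemma dil_mul (a b : ℝ) (x : Fin 5 → ℝ) : dil (a * b) x = dil a (dil b x) := by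
  ext i
  fin_cases i <;> simp [dil] <;> ring

lemma dil_one : dil 1 = id := by
  ext x i
  fin_cases i <;> simp [dil]

lemma image_dil {r : ℝ} (hr : r ≠ 0) : image (dil r) = preimage (dil r⁻¹) := by
  refine image_eq_preimage_of_inverse (fun x => ?_) (fun x => ?_)
  · rw [← dil_mul, inv_mul_cancel₀ hr, dil_one, id]
  · rw [← dil_mul, mul_inv_cancel₀ hr, dil_one, id]

lemma mem_dil_image_Eset {r : ℝ} (hr : 0 < r) {y : Fin 5 → ℝ} :
    y ∈ dil r '' Eset ↔ y ∈ E2 ∧ ∃ t ∈ Zset, (y 4 - r ^ 3 * t) ^ 2 ≤ 2 * y 1 ^ 3 * y 3 := by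
  have h4 (t : ℝ) : (r⁻¹ ^ 3 * y 4 - t) ^ 2 = r⁻¹ ^ 6 * (y 4 - r ^ 3 * t) ^ 2 := by
    field_simp
  have h13 : 2 * (r⁻¹ * y 1) ^ 3 * (r⁻¹ ^ 3 * y 3) = r⁻¹ ^ 6 * (2 * y 1 ^ 3 * y 3) := by ring
  have hr' : 0 < r⁻¹ := inv_pos.2 hr
  rw [image_dil hr.ne', mem_preimage]
  change (0 ≤ r⁻¹ * y 1 ∧ 0 ≤ r⁻¹ ^ 3 * y 3 ∧
    ∃ t ∈ Zset, (r⁻¹ ^ 3 * y 4 - t) ^ 2 ≤ 2 * (r⁻¹ * y 1) ^ 3 * (r⁻¹ ^ 3 * y 3)) ↔ _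
  simp only [h4, h13, mul_le_mul_iff_right₀ (pow_pos hr' 6), mul_nonneg_iff_of_pos_left hr',
    mul_nonneg_iff_of_pos_left (pow_pos hr' 3), E2, mem_ofPred_eq, and_assoc]

lemma Cone_subset_dil_image_Eset {r : ℝ} (hr : 0 < r) : Cone ⊆ dil r '' Eset :=
  fun y ⟨h1, h3, h4⟩ => (mem_dil_image_Eset hr).2 ⟨⟨h1, h3⟩, 0, .inl rfl, by simpa using h4⟩

lemma dil_image_Eset_subset_E2 {r : ℝ} (hr : 0 < r) : dil r '' Eset ⊆ E2 :=
  fun _ hy => ((mem_dil_image_Eset hr).1 hy).1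

lemma Cone_ne_E2 : Cone ≠ E2 := by
  intro h
  have : (Pi.single 4 1 : Fin 5 → ℝ) ∈ E2 \ Cone := by simp [E2, Cone]
  exact this.2 (h ▸ this.1)

lemma nseq_strictMono : StrictMono nseq :=
  (pow_right_strictMono₀ one_lt_two).comp (pow_right_strictMono₀ (by norm_num))

lemma nseq_cast_pos (j : ℕ) : (0 : ℝ) < nseq j := by
  exact_mod_cast Nat.two_pow_pos _

lemma nseq_succ (j : ℕ) : (nseq (j + 1) : ℝ) = (nseq j : ℝ) ^ 3 := by
  rw [nseq, nseq, pow_succ, pow_mul]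
  push_cast
  rfl

lemma antitone_inv_nseq : Antitone fun j => (nseq j : ℝ)⁻¹ := fun _ _ hij =>
  inv_anti₀ (nseq_cast_pos _) (by exact_mod_cast nseq_strictMono.monotone hij)

lemma tendsto_nseq : Tendsto (fun j => (nseq j : ℝ)) atTop atTop :=
  tendsto_natCast_atTop_atTop.comp nseq_strictMono.tendsto_atTop

lemma mem_Ioc_union_Ico_neg_iff {a b t : ℝ} (hb : 0 ≤ b) :
    t ∈ Ioc b a ∪ Ico (-a) (-b) ↔ |t| ∈ Ioc b a := by
  simp only [mem_union, mem_Ioc, mem_Ico]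
  rcases abs_cases t with ⟨h, _⟩ | ⟨h, _⟩ <;> rw [h] <;> grind

lemma mem_Zset_iff {t : ℝ} :
    t ∈ Zset ↔ t = 0 ∨ ∃ j, Odd j ∧ |t| ∈ Ioc (nseq (j + 1) : ℝ)⁻¹ (nseq j)⁻¹ := by
  simp only [Zset, nseq_succ, mem_union, mem_singleton_iff, mem_iUnion, exists_prop,
    mem_Ioc_union_Ico_neg_iff (inv_nonneg.2 (pow_nonneg (nseq_cast_pos _).le 3))]

lemma div_sq_mem_Zset {k : ℕ} (hk : Odd k) {s : ℝ} (hs : |s| ∈ Ioc (nseq k : ℝ)⁻¹ (nseq k)) :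
    s / (nseq k : ℝ) ^ 2 ∈ Zset := by
  have hN := nseq_cast_pos k
  refine mem_Zset_iff.2 (.inr ⟨k, hk, ?_, ?_⟩)
  · rw [abs_div, abs_of_pos (pow_pos hN 2), nseq_succ, lt_div_iff₀ (pow_pos hN 2)]
    convert hs.1 using 1
    field_simp
  · rw [abs_div, abs_of_pos (pow_pos hN 2), div_le_iff₀ (pow_pos hN 2)]
    convert hs.2 using 1
    field_simp

lemma abs_sq_mul_le_or_lt_of_mem_Zset {k : ℕ} (hk : Even k) {t : ℝ} (ht : t ∈ Zset) :
    |(nseq k : ℝ) ^ 2 * t| ≤ (nseq k : ℝ)⁻¹ ∨ (nseq k : ℝ) < |(nseq k : ℝ) ^ 2 * t| := by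
  have hN := nseq_cast_pos k
  rw [abs_mul, abs_of_pos (pow_pos hN 2)]
  rcases mem_Zset_iff.1 ht with rfl | ⟨j, hj, hlo, hhi⟩
  · exact .inl (by simp [hN.le])
  rcases lt_or_gt_of_ne (fun h : j = k => (Nat.not_even_iff_odd.2 hj) (h ▸ hk)) with hjk | hjk
  · right
    calc (nseq k : ℝ) = (nseq k : ℝ) ^ 2 * (nseq k : ℝ)⁻¹ := by field_simp
      _ ≤ (nseq k : ℝ) ^ 2 * (nseq (j + 1) : ℝ)⁻¹ := 
          mul_le_mul_of_nonneg_left (antitone_inv_nseq hjk) (by positivity)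
      _ < (nseq k : ℝ) ^ 2 * |t| := by gcongr
  · left
    calc (nseq k : ℝ) ^ 2 * |t| ≤ (nseq k : ℝ) ^ 2 * (nseq (k + 1) : ℝ)⁻¹ := by
          gcongr; exact hhi.trans (antitone_inv_nseq hjk)
      _ = (nseq k : ℝ)⁻¹ := by rw [nseq_succ]; field_simp

lemma rpow_two_thirds_pow_three {x : ℝ} (hx : 0 ≤ x) : (x ^ ((2 : ℝ) / 3)) ^ 3 = x ^ 2 := by
  rw [← Real.rpow_mul_natCast hx]
  norm_num

lemma abs_mem_Ioc_of_mem_E2_diff_dil_image {k : ℕ} (hk : Odd k) {y : Fin 5 → ℝ}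
    (hy : y ∈ E2 \ dil ((nseq k : ℝ) ^ ((2 : ℝ) / 3)) '' Eset) (hyN : |y 4| ≤ nseq k) :
    |y 4| ∈ Ioc 0 (nseq k : ℝ)⁻¹ := by
  have hN := nseq_cast_pos k
  obtain ⟨hE2, hyE⟩ := hy
  rw [mem_dil_image_Eset (Real.rpow_pos_of_pos hN _), rpow_two_thirds_pow_three hN.le] at hyE
  have hcone : 0 ≤ 2 * y 1 ^ 3 * y 3 :=
    mul_nonneg (mul_nonneg two_pos.le (pow_nonneg hE2.1 3)) hE2.2
  have hnot (t : ℝ) (ht : t ∈ Zset) : y 4 ≠ (nseq k : ℝ) ^ 2 * t := fun h =>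
    hyE ⟨hE2, t, ht, by rwa [← h, sub_self, zero_pow two_ne_zero]⟩
  constructor
  · exact abs_pos.2 (by simpa using hnot 0 (mem_Zset_iff.2 (.inl rfl)))
  · by_contra! hlt
    exact hnot _ (div_sq_mem_Zset hk ⟨hlt, hyN⟩) (by field_simp)

lemma sq_sub_mem_Ioc_of_mem_dil_image_diff_Cone {k : ℕ} (hk : Even k) {R : ℝ}
    (hRN : R + 2 * R ^ 2 ≤ nseq k) {y : Fin 5 → ℝ}
    (hy : y ∈ dil ((nseq k : ℝ) ^ ((2 : ℝ) / 3)) '' Eset \ Cone) (hyR : ∀ i, |y i| ≤ R) :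
    y 4 ^ 2 - 2 * y 1 ^ 3 * y 3 ∈ Ioc 0 (2 * R / nseq k) := by
  have hN := nseq_cast_pos k
  obtain ⟨hyE, hyC⟩ := hy
  rw [mem_dil_image_Eset (Real.rpow_pos_of_pos hN _), rpow_two_thirds_pow_three hN.le] at hyE
  obtain ⟨⟨h1, h3⟩, t, ht, hineq⟩ := hyE
  have hlt : 2 * y 1 ^ 3 * y 3 < y 4 ^ 2 := lt_of_not_ge fun h => hyC ⟨h1, h3, h⟩
  refine ⟨sub_pos.2 hlt, ?_⟩
  have hR : 0 ≤ R := (abs_nonneg _).trans (hyR 0)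
  set s := (nseq k : ℝ) ^ 2 * t
  rcases abs_sq_mul_le_or_lt_of_mem_Zset hk ht with hs | hs
  · calc y 4 ^ 2 - 2 * y 1 ^ 3 * y 3 ≤ 2 * |y 4| * |s| := by
          nlinarith [sq_nonneg s, le_abs_self (y 4 * s), abs_mul (y 4) s]
      _ ≤ 2 * R * (nseq k : ℝ)⁻¹ := by gcongr; exact hyR 4
      _ = 2 * R / nseq k := (div_eq_mul_inv _ _).symm
  · exfalso
    -- the translate `s e₅` is too far out for the shifted cone to meet the ball
    have hcone : 2 * y 1 ^ 3 * y 3 ≤ 2 * R ^ 4 := by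
      have hy1 := pow_le_pow_left₀ h1 ((le_abs_self _).trans (hyR 1)) 3
      have hy3 := (le_abs_self _).trans (hyR 3)
      nlinarith [mul_le_mul hy1 hy3 h3 (by positivity)]
    have hfar : (nseq k - R : ℝ) < |y 4 - s| := by
      linarith [hyR 4, abs_sub_abs_le_abs_sub s (y 4), abs_sub_comm s (y 4)]
    have hsq : (nseq k - R : ℝ) ^ 2 < (y 4 - s) ^ 2 := by
      rw [← sq_abs (y 4 - s)]
      exact pow_lt_pow_left₀ hfar (by nlinarith) two_ne_zero
    nlinarith

/-- Along the dilation factors `λ_ℓ = n_{2ℓ+1}^{2/3}` the dilates of `E` converge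
locally in measure to the half-space `E₂`, while along `μ_ℓ = n_{2ℓ}^{2/3}` they
converge locally in measure to the cone `𝒞 ≠ E₂`: the set `E` has two distinct blow-ups
at the origin. -/
theorem F23_nonunique_blowups :
    (∀ R : ℝ, 0 < R →
      Tendsto (fun ℓ : ℕ =>
          volume ((symmDiff (dil ((nseq (2 * ℓ + 1) : ℝ) ^ ((2 : ℝ) / 3)) '' Eset) E2) ∩
            Metric.ball (0 : Fin 5 → ℝ) R))
        atTop (nhds 0)) ∧
    (∀ R : ℝ, 0 < R →
      Tendsto (fun ℓ : ℕ =>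
          volume ((symmDiff (dil ((nseq (2 * ℓ) : ℝ) ^ ((2 : ℝ) / 3)) '' Eset) Cone) ∩
            Metric.ball (0 : Fin 5 → ℝ) R))
        atTop (nhds 0)) ∧
    Cone ≠ E2 := by
  have hodd : Tendsto (fun ℓ : ℕ => (nseq (2 * ℓ + 1) : ℝ)) atTop atTop :=
    tendsto_nseq.comp (tendsto_atTop_mono (fun ℓ => (by omega : ℓ ≤ 2 * ℓ + 1)) tendsto_id)
  have heven : Tendsto (fun ℓ : ℕ => (nseq (2 * ℓ) : ℝ)) atTop atTop :=
    tendsto_nseq.comp (tendsto_atTop_mono (fun ℓ => (by omega : ℓ ≤ 2 * ℓ)) tendsto_id)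
  have hr (k : ℕ) : 0 < (nseq k : ℝ) ^ ((2 : ℝ) / 3) := Real.rpow_pos_of_pos (nseq_cast_pos k) _
  refine ⟨fun R _ => ?_, fun R _ => ?_, Cone_ne_E2⟩
  · refine tendsto_measure_inter_of_subset_preimage_Ioc Metric.isOpen_ball.measurableSet
      measure_ball_lt_top.ne (g := fun y => |y 4|) (by fun_prop)
      (tendsto_inv_atTop_zero.comp hodd) ?_
    filter_upwards [hodd.eventually_ge_atTop R] with ℓ hℓ
    rintro y ⟨hy, hyB⟩
    rw [symmDiff_of_le (dil_image_Eset_subset_E2 (hr _))] at hy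
    exact abs_mem_Ioc_of_mem_E2_diff_dil_image (odd_two_mul_add_one ℓ) hy
      ((abs_le_of_mem_ball hyB 4).trans hℓ)
  · refine tendsto_measure_inter_of_subset_preimage_Ioc Metric.isOpen_ball.measurableSet
      measure_ball_lt_top.ne (g := fun y => y 4 ^ 2 - 2 * y 1 ^ 3 * y 3) (by fun_prop)
      ((tendsto_const_nhds (x := 2 * R)).div_atTop heven) ?_
    filter_upwards [heven.eventually_ge_atTop (R + 2 * R ^ 2)] with ℓ hℓ
    rintro y ⟨hy, hyB⟩
    rw [symmDiff_of_ge (Cone_subset_dil_image_Eset (hr _))] at hy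
    exact sq_sub_mem_Ioc_of_mem_dil_image_diff_Cone (even_two_mul ℓ) hℓ hy
      (abs_le_of_mem_ball hyB)
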